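/- For every integer b ≥ 2 and every g ∈ C¹(S¹) with ∫ g dx = 0, the Perron–Frobenius operator satisfies ‖T̂*_b g‖ ≤ 2 b^{−1} ‖g‖, where ‖h‖ := sup|h| + sup|h'|. -/

import Mathlib

/-!
Setting: the circle `S¹ = ℝ/ℤ` with Lebesgue (Haar) probability measure, realized as
`1`-periodic functions on `ℝ` together with Lebesgue measure restricted to `(0, 1]`.
For an integer `b ≥ 2`, the map `T_b x = bx (mod 1)` lifts to `x ↦ b * x` on `ℝ`, and its
Perron–Frobenius operator (the `L²`-adjoint of the Koopman operator `g ↦ g ∘ T_b`) is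
`(T̂*_b g)(x) = (1/b) ∑_{j<b} g((x+j)/b)`.
-/

open MeasureTheory ProbabilityTheory Filter Function
open scoped ENNReal Topology

/-- The Lebesgue (Haar) probability measure of the circle, realized on `(0, 1] ⊆ ℝ`. -/
noncomputable def circleMeasure : Measure ℝ := volume.restrict (Set.Ioc 0 1)

/-- The Perron–Frobenius operator of `T_b x = bx (mod 1)`, acting on (`1`-periodic)
functions on `ℝ`: `(T̂*_b g)(x) = (1/b) ∑_{j<b} g((x+j)/b)`. -/
noncomputable def PFc (b : ℕ) (g : ℝ → ℝ) : ℝ → ℝ :=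
  fun x => (1 / (b : ℝ)) * ∑ j ∈ Finset.range b, g ((x + j) / b)

/-- `T̂*_{b_1} ⋯ T̂*_{b_k} g` for a finite sequence `[b_1, …, b_k]`. -/
noncomputable def PFcList (l : List ℕ) (g : ℝ → ℝ) : ℝ → ℝ := l.foldr PFc g

/-- `PFcSeg a i j = T̂*_{[i..j]} = T̂*_{a_j} ⋯ T̂*_{a_i}` for `i ≤ j`, the identity otherwise. -/
noncomputable def PFcSeg (a : ℕ → ℕ) (i : ℕ) : ℕ → (ℝ → ℝ) → (ℝ → ℝ)
  | 0 => id
  | j + 1 => if i ≤ j + 1 then fun g => PFc (a (j + 1)) (PFcSeg a i j g) else id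

/-- `u_k = ∑_{i=1}^k T̂*_{[i+1..k]} f`. -/
noncomputable def uc (a : ℕ → ℕ) (f : ℝ → ℝ) (k : ℕ) : ℝ → ℝ :=
  fun x => ∑ i ∈ Finset.Icc 1 k, PFcSeg a (i + 1) k f x

/-- `T_{[k]} = T_{a_k} ∘ ⋯ ∘ T_{a_1}` is multiplication (mod 1) by `∏_{i=1}^k a_i`. -/
def prodA (a : ℕ → ℕ) (k : ℕ) : ℕ := ∏ i ∈ Finset.Icc 1 k, a i

/-- The Birkhoff-like sums `S_n = ∑_{k=1}^n f ∘ T_{[k]}`, for a `1`-periodic `f`. -/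
noncomputable def Sc (a : ℕ → ℕ) (f : ℝ → ℝ) (n : ℕ) : ℝ → ℝ :=
  fun x => ∑ k ∈ Finset.Icc 1 n, f ((prodA a k : ℝ) * x)

/-- The `C¹`-norm `‖g‖ = sup|g| + sup|g'|`. -/
noncomputable def Cnorm (g : ℝ → ℝ) : ℝ := (⨆ x : ℝ, |g x|) + ⨆ x : ℝ, |deriv g x|

/-- The pullback σ-algebra `T_b^{-1}(Borel)` on the circle, realized on `ℝ` as the σ-algebra
generated by the lift `x ↦ fract (b * x)` of `T_b`. -/
noncomputable def circleSigma (b : ℕ) : MeasurableSpace ℝ :=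
  MeasurableSpace.comap (fun x => Int.fract ((b : ℝ) * x)) Real.measurableSpace

/-- `cos²χ_k = ‖E[u_k | T_{a_{k+1}}^{-1}(Borel)]‖²_{L²} / ‖u_k‖²_{L²}` (`= 0` when `u_k = 0`,
by the convention `c / 0 = 0`). -/
noncomputable def cos2c (a : ℕ → ℕ) (f : ℝ → ℝ) (k : ℕ) : ℝ :=
  (∫ x, ((circleMeasure[uc a f k|circleSigma (a (k + 1))]) x) ^ 2 ∂circleMeasure) /
    ∫ x, (uc a f k x) ^ 2 ∂circleMeasure

/-!
Since `g` has mean zero over every period, `(T̂*_b g)(x)` is the error of the left Riemann sum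
of `g` over the `b` cells `[(x+j)/b, (x+j+1)/b]` of length `1/b`; on each cell that error is at
most `sup|g'| · b⁻²`, so `sup|T̂*_b g| ≤ b⁻¹ sup|g'|`. By the chain rule
`(T̂*_b g)' = b⁻¹ T̂*_b g'`, and `T̂*_b` is an average, so `sup|(T̂*_b g)'| ≤ b⁻¹ sup|g'|` too.
-/

theorem Function.Periodic.deriv {g : ℝ → ℝ} {c : ℝ} (hg : Periodic g c) :
    Periodic (_root_.deriv g) c := fun x => by
  rw [← deriv_comp_add_const]
  exact congrArg (_root_.deriv · x) (funext hg)

lemma abs_sub_le_of_abs_deriv_le {g : ℝ → ℝ} {M : ℝ} (hg : Differentiable ℝ g)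
    (hM : ∀ x, |deriv g x| ≤ M) (s t : ℝ) : |g t - g s| ≤ M * |t - s| := by
  simpa [Real.norm_eq_abs] using convex_univ.norm_image_sub_le_of_norm_deriv_le
    (fun x _ => hg x) (fun x _ => hM x) (Set.mem_univ s) (Set.mem_univ t)

lemma abs_mul_sub_integral_le {g : ℝ → ℝ} {M a h : ℝ} (hg : Differentiable ℝ g)
    (hM : ∀ x, |deriv g x| ≤ M) (hh : 0 ≤ h) :
    |h * g a - ∫ t in a..a + h, g t| ≤ M * h * h := by
  have hM0 : 0 ≤ M := (abs_nonneg _).trans (hM 0)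
  have hconst : h * g a = ∫ _ in a..a + h, g a := by simp
  rw [hconst, ← intervalIntegral.integral_sub intervalIntegrable_const
    (hg.continuous.intervalIntegrable _ _)]
  have hbound : ∀ t ∈ Set.uIoc a (a + h), ‖g a - g t‖ ≤ M * h := by
    intro t ht
    rw [Set.uIoc_of_le (by linarith)] at ht
    calc ‖g a - g t‖ ≤ M * |a - t| := abs_sub_le_of_abs_deriv_le hg hM t a
      _ ≤ M * h := by
        gcongr
        rw [abs_sub_comm, abs_of_nonneg (by linarith [ht.1])]
        linarith [ht.2]
  simpa [abs_of_nonneg hh] using intervalIntegral.norm_integral_le_of_norm_le_const hbound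

lemma abs_PFc_le_of_integral_eq_zero {b : ℕ} (hb : 0 < b) {g : ℝ → ℝ} {M : ℝ}
    (hper : Periodic g 1) (hg : Differentiable ℝ g) (hM : ∀ x, |deriv g x| ≤ M)
    (hmean : ∫ t in (0 : ℝ)..1, g t = 0) (x : ℝ) :
    |PFc b g x| ≤ M * (b : ℝ)⁻¹ := by
  set p : ℕ → ℝ := fun j => (x + j) / b
  have hp : ∀ j, p (j + 1) = p j + (b : ℝ)⁻¹ := by
    intro j
    simp only [p]
    field_simp
    push_cast
    ring
  have hcells : ∑ j ∈ Finset.range b, ∫ t in p j..p (j + 1), g t = 0 := by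
    rw [intervalIntegral.sum_integral_adjacent_intervals
      fun j _ => hg.continuous.intervalIntegrable _ _]
    have hperiod : p b = p 0 + 1 := by
      simp only [p]
      field_simp
      simp
    rw [hperiod, hper.intervalIntegral_add_eq (p 0) 0, zero_add, hmean]
  calc |PFc b g x|
      = |∑ j ∈ Finset.range b, ((b : ℝ)⁻¹ * g (p j) - ∫ t in p j..p j + (b : ℝ)⁻¹, g t)| := by
        simp_rw [← hp]
        rw [Finset.sum_sub_distrib, hcells, sub_zero, PFc, Finset.mul_sum, one_div]
    _ ≤ ∑ _j ∈ Finset.range b, M * (b : ℝ)⁻¹ * (b : ℝ)⁻¹ :=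
        (Finset.abs_sum_le_sum_abs _ _).trans
          (Finset.sum_le_sum fun j _ => abs_mul_sub_integral_le hg hM (by positivity))
    _ = M * (b : ℝ)⁻¹ := by
        simp only [Finset.sum_const, Finset.card_range, nsmul_eq_mul]
        field_simp

lemma hasDerivAt_PFc (b : ℕ) {g : ℝ → ℝ} (hg : Differentiable ℝ g) (x : ℝ) :
    HasDerivAt (PFc b g) ((b : ℝ)⁻¹ * PFc b (deriv g) x) x := by
  have hterm : ∀ j ∈ Finset.range b,
      HasDerivAt (fun y => g ((y + j) / b)) (deriv g ((x + j) / b) * (1 / (b : ℝ))) x :=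
    fun j _ => (hg _).hasDerivAt.comp x (((hasDerivAt_id x).add_const _).div_const _)
  refine ((HasDerivAt.fun_sum hterm).const_mul (1 / (b : ℝ))).congr_deriv ?_
  rw [PFc, ← Finset.sum_mul]
  ring

lemma abs_PFc_le {b : ℕ} (hb : 0 < b) {h : ℝ → ℝ} {C : ℝ} (hC : ∀ x, |h x| ≤ C) (x : ℝ) :
    |PFc b h x| ≤ C := by
  calc |PFc b h x| ≤ 1 / (b : ℝ) * ∑ j ∈ Finset.range b, |h ((x + j) / b)| := by
        rw [PFc, abs_mul, abs_of_pos (by positivity)]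
        gcongr
        exact Finset.abs_sum_le_sum_abs _ _
    _ ≤ 1 / (b : ℝ) * ∑ _j ∈ Finset.range b, C := by
        gcongr
        exact hC _
    _ = C := by
        simp only [one_div, Finset.sum_const, Finset.card_range, nsmul_eq_mul]
        field_simp

lemma Cnorm_le {f : ℝ → ℝ} {A B : ℝ} (hA : ∀ x, |f x| ≤ A) (hB : ∀ x, |deriv f x| ≤ B) :
    Cnorm f ≤ A + B :=
  add_le_add (ciSup_le hA) (ciSup_le hB)

theorem PF_contraction_single
    (b : ℕ) (hb : 2 ≤ b)
    (g : ℝ → ℝ) (hg_per : Periodic g 1) (hg_C1 : ContDiff ℝ 1 g)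
    (hg_mean : ∫ x in Set.Ioc (0 : ℝ) 1, g x = 0) :
    Cnorm (PFc b g) ≤ 2 * (b : ℝ)⁻¹ * Cnorm g := by
  have hb0 : 0 < b := by omega
  have hg : Differentiable ℝ g := hg_C1.differentiable one_ne_zero
  set M := ⨆ x, |deriv g x|
  have hM : ∀ x, |deriv g x| ≤ M := le_ciSup ((hg_per.deriv.comp abs).compact_of_continuous
    one_ne_zero (hg_C1.continuous_deriv le_rfl).abs).bddAbove
  have hPF : ∀ x, |PFc b g x| ≤ M * (b : ℝ)⁻¹ := abs_PFc_le_of_integral_eq_zero hb0 hg_per hg hM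
    (by rwa [intervalIntegral.integral_of_le zero_le_one])
  have hPF' : ∀ x, |deriv (PFc b g) x| ≤ M * (b : ℝ)⁻¹ := fun x => by
    rw [(hasDerivAt_PFc b hg x).deriv, abs_mul, abs_of_pos (by positivity), mul_comm]
    exact mul_le_mul_of_nonneg_right (abs_PFc_le hb0 hM x) (by positivity)
  calc Cnorm (PFc b g) ≤ M * (b : ℝ)⁻¹ + M * (b : ℝ)⁻¹ := Cnorm_le hPF hPF'
    _ = 2 * (b : ℝ)⁻¹ * M := by ring
    _ ≤ 2 * (b : ℝ)⁻¹ * Cnorm g := by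
        gcongr
        exact le_add_of_nonneg_left (Real.iSup_nonneg fun x => abs_nonneg _)
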